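/- Let J(z) be a skew-symmetric linear operator for each z (i.e., ⟨x, J(z)y⟩ = -⟨y, J(z)x⟩), and consider the Poisson time integrator zⁿ⁺¹ = zⁿ + Δt J((zⁿ+zⁿ⁺¹)/2) ∂̄H, where ∂̄H = ∫₀¹ ∇H(zⁿ + s(zⁿ⁺¹-zⁿ)) ds is the averaged gradient. Then the scheme conserves the Hamiltonian exactly: H(zⁿ⁺¹) = H(zⁿ). -/

import Mathlib

open scoped RealInnerProductSpace

section AveragedGradient

variable {V : Type*} [NormedAddCommGroup V] [InnerProductSpace ℝ V] [CompleteSpace V]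

/-- The averaged gradient `∂̄H` of the integrator, for the step from `a` to `b`. -/
noncomputable def averagedGradient (H : V → ℝ) (a b : V) : V :=
  ∫ s in (0:ℝ)..1, gradient H (a + s • (b - a))

theorem ContDiff.continuous_gradient {H : V → ℝ} (hH : ContDiff ℝ 1 H) :
    Continuous (gradient H) :=
  (InnerProductSpace.toDual ℝ V).symm.continuous.comp (hH.continuous_fderiv one_ne_zero)

theorem hasDerivAt_comp_add_smul {H : V → ℝ} {a v : V} {s : ℝ}
    (hH : DifferentiableAt ℝ H (a + s • v)) :
    HasDerivAt (fun t : ℝ => H (a + t • v)) ⟪gradient H (a + s • v), v⟫ s := by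
  have hline : HasDerivAt (fun t : ℝ => a + t • v) v s := by
    simpa using ((hasDerivAt_id s).smul_const v).const_add a
  rw [inner_gradient_left]
  exact hH.hasFDerivAt.comp_hasDerivAt s hline

/-- `∂̄H` is a discrete gradient of `H`: fundamental theorem of calculus along the segment. -/
theorem sub_eq_inner_averagedGradient {H : V → ℝ} (hH : ContDiff ℝ 1 H) (a b : V) :
    H b - H a = ⟪averagedGradient H a b, b - a⟫ := by
  have hg : Continuous fun s : ℝ => gradient H (a + s • (b - a)) :=
    hH.continuous_gradient.comp (continuous_const.add (continuous_id.smul continuous_const))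
  have hftc := intervalIntegral.integral_eq_sub_of_hasDerivAt
    (fun s _ => hasDerivAt_comp_add_smul (hH.differentiable one_ne_zero _))
    ((hg.inner continuous_const).intervalIntegrable 0 1)
  simp only [one_smul, zero_smul, add_zero, add_sub_cancel] at hftc
  rw [← hftc, averagedGradient, real_inner_comm, ← innerSL_apply_apply ℝ,
    ← (innerSL ℝ (b - a)).intervalIntegral_comp_comm (hg.intervalIntegrable 0 1)]
  simp only [innerSL_apply_apply, real_inner_comm]

end AveragedGradient

theorem inner_self_map_eq_zero_of_skew {V : Type*} [NormedAddCommGroup V] [InnerProductSpace ℝ V]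
    {A : V →ₗ[ℝ] V} (hA : ∀ x y, ⟪x, A y⟫ = -⟪y, A x⟫) (x : V) : ⟪x, A x⟫ = 0 := by
  linarith [hA x x]

/-- The Poisson time integrator conserves the Hamiltonian exactly: if `J(z)` is
skew-symmetric for each `z` and `zⁿ⁺¹ = zⁿ + Δt J((zⁿ+zⁿ⁺¹)/2) ∂̄H`, where
`∂̄H = ∫₀¹ ∇H(zⁿ + s(zⁿ⁺¹-zⁿ)) ds` is the averaged gradient, then `H(zⁿ⁺¹) = H(zⁿ)`. -/
theorem poisson_integrator_conserves_hamiltonian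
    {V : Type*} [NormedAddCommGroup V] [InnerProductSpace ℝ V] [FiniteDimensional ℝ V]
    (J : V → V →ₗ[ℝ] V)
    (hskew : ∀ z x y, ⟪x, J z y⟫ = -⟪y, J z x⟫)
    (H : V → ℝ) (hH : ContDiff ℝ 1 H)
    (Δt : ℝ) (zn zn1 : V)
    (hscheme : zn1 = zn +
      Δt • J ((1 / 2 : ℝ) • (zn + zn1))
        (∫ s in (0:ℝ)..1, gradient H (zn + s • (zn1 - zn)))) :
    H zn1 = H zn := by
  have hstep : zn1 - zn = Δt • J ((1 / 2 : ℝ) • (zn + zn1)) (averagedGradient H zn zn1) :=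
    sub_eq_iff_eq_add'.mpr hscheme
  rw [← sub_eq_zero, sub_eq_inner_averagedGradient hH, hstep, real_inner_smul_right,
    inner_self_map_eq_zero_of_skew (hskew _), mul_zero]
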